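/- Let m ≥ 3 and let b₁, …, b_m ∈ ℝ³ be vectors whose span is all of ℝ³. For k = (k₁, …, k_m) ∈ ℝᵐ write K(k) = Σ_{j=1}^m k_j b_j b_jᵀ. Then the set of k ∈ ℝᵐ such that all k_j > 0 and the symmetric matrix K(k) has a repeated eigenvalue (i.e., its three real eigenvalues, counted with multiplicity, are not pairwise distinct) has m-dimensional Lebesgue measure zero. -/

import Mathlib

open Matrix MeasureTheory MvPolynomial

theorem mvpoly_null : ∀ (n : ℕ) (P : MvPolynomial (Fin n) ℝ), P ≠ 0 →
    volume {x : Fin n → ℝ | eval x P = 0} = 0 := by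
  intro n
  induction n with
  | zero =>
      intro P hP
      obtain ⟨c, rfl⟩ := MvPolynomial.C_surjective (Fin 0) P
      have hc : c ≠ 0 := fun h => hP (by simp [h])
      have h : {x : Fin 0 → ℝ | eval x (C c : MvPolynomial (Fin 0) ℝ) = 0} = ∅ := by
        ext x; simp [hc]
      rw [h, measure_empty]
  | succ n ih =>
      intro P hP
      set Q := finSuccEquiv ℝ n P with hQdef
      have hQ0 : Q ≠ 0 := by
        intro h
        apply hP
        have := congrArg (finSuccEquiv ℝ n).symm h
        simpa [hQdef] using this
      have hc : Q.leadingCoeff ≠ 0 := Polynomial.leadingCoeff_ne_zero.mpr hQ0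
      set s : Set ((Fin n → ℝ) × ℝ) :=
        {p | eval (Fin.cons p.2 p.1 : Fin (n+1) → ℝ) P = 0} with hsdef
      have hg : Continuous fun p : (Fin n → ℝ) × ℝ => (Fin.cons p.2 p.1 : Fin (n+1) → ℝ) := by
        refine continuous_pi fun i => ?_
        refine Fin.cases ?_ (fun j => ?_) i
        · simpa using continuous_snd
        · simpa using (continuous_apply j).comp' continuous_fst
      have hFcont : Continuous fun p : (Fin n → ℝ) × ℝ =>
          eval (Fin.cons p.2 p.1 : Fin (n+1) → ℝ) P :=
        (MvPolynomial.continuous_eval P).comp hg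
      have hs : MeasurableSet s := hFcont.measurable (measurableSet_singleton 0)
      have hT : MeasurePreserving
          (fun x : Fin (n+1) → ℝ => (Prod.swap (MeasurableEquiv.piFinSuccAbove (fun _ => ℝ) 0 x)))
          volume (volume.prod volume) := by
        have h1 := volume_preserving_piFinSuccAbove (fun _ : Fin (n+1) => ℝ) 0
        have h2 : MeasurePreserving (Prod.swap : ℝ × (Fin n → ℝ) → (Fin n → ℝ) × ℝ)
            volume (volume.prod volume) := by
          rw [Measure.volume_eq_prod]
          exact Measure.measurePreserving_swap
        exact h2.comp h1
      have hpre : {x : Fin (n+1) → ℝ | eval x P = 0} =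
          (fun x : Fin (n+1) → ℝ =>
            (Prod.swap (MeasurableEquiv.piFinSuccAbove (fun _ => ℝ) 0 x))) ⁻¹' s := by
        ext x
        have h1 : (Prod.swap (MeasurableEquiv.piFinSuccAbove (fun _ => ℝ) 0 x) :
            (Fin n → ℝ) × ℝ) = (Fin.removeNth 0 x, x 0) := rfl
        have h2 : (Fin.cons (x 0) (Fin.removeNth 0 x) : Fin (n+1) → ℝ) = x := by
          ext i
          refine Fin.cases ?_ (fun j => ?_) i <;> simp [Fin.removeNth, Fin.tail]
        simp only [Set.mem_setOf_eq, Set.mem_preimage, h1, hsdef, h2]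
      rw [hpre, hT.measure_preimage hs.nullMeasurableSet]
      rw [Measure.measure_prod_null hs]
      have h1 : ∀ᵐ y : Fin n → ℝ ∂volume, eval y Q.leadingCoeff ≠ 0 := by
        rw [ae_iff]
        simpa [not_not] using ih Q.leadingCoeff hc
      filter_upwards [h1] with y hy
      have hmap : Q.map (eval y) ≠ 0 := by
        intro h
        apply hy
        have h2 : (Q.map (eval y)).coeff Q.natDegree = 0 := by rw [h]; simp
        rw [Polynomial.coeff_map] at h2
        rw [Polynomial.leadingCoeff]
        exact h2
      have hset : Prod.mk y ⁻¹' s = {a : ℝ | Polynomial.eval a (Q.map (eval y)) = 0} := by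
        ext a
        show eval (Fin.cons a y : Fin (n+1) → ℝ) P = 0 ↔ _
        rw [eval_eq_eval_mv_eval']
        exact Iff.rfl
      simp only [Pi.zero_apply]
      rw [hset]
      exact (Polynomial.finite_setOf_isRoot hmap).measure_zero _

lemma powsum_traces (M : Matrix (Fin 3) (Fin 3) ℝ) (h : M.IsHermitian) :
    M.trace = ∑ i, h.eigenvalues i ∧ (M*M).trace = ∑ i, (h.eigenvalues i)^2 ∧
      (M*M*M).trace = ∑ i, (h.eigenvalues i)^3 := by
  set U : Matrix (Fin 3) (Fin 3) ℝ := (h.eigenvectorUnitary : Matrix (Fin 3) (Fin 3) ℝ) with hU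
  have hU2 : star U * U = 1 := mem_unitaryGroup_iff'.mp (h.eigenvectorUnitary).2
  set D : Matrix (Fin 3) (Fin 3) ℝ := diagonal h.eigenvalues with hD
  have hM : M = U * D * star U := by
    simpa using h.spectral_theorem
  have key : ∀ A B : Matrix (Fin 3) (Fin 3) ℝ, (U*A*star U) * (U*B*star U) = U*(A*B)*star U := by
    intro A B
    calc (U*A*star U) * (U*B*star U) = U*(A*((star U*U)*(B*star U))) := by
          simp only [Matrix.mul_assoc]
      _ = U*(A*(B*star U)) := by rw [hU2, one_mul]
      _ = U*(A*B)*star U := by simp only [Matrix.mul_assoc]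
  have tr : ∀ A : Matrix (Fin 3) (Fin 3) ℝ, (U*A*star U).trace = A.trace := by
    intro A
    rw [Matrix.trace_mul_cycle, hU2, one_mul]
  have h2 : M * M = U*(D*D)*star U := by conv_lhs => rw [hM, key]
  have h3 : M * M * M = U*(D*D*D)*star U := by conv_lhs => rw [hM, key, key]
  refine ⟨?_, ?_, ?_⟩
  · conv_lhs => rw [hM]
    rw [tr, hD, Matrix.trace_diagonal]
  · conv_lhs => rw [h2]
    rw [tr, hD, Matrix.diagonal_mul_diagonal, Matrix.trace_diagonal]
    exact Finset.sum_congr rfl fun i _ => by simp [sq]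
  · conv_lhs => rw [h3]
    rw [tr, hD, Matrix.diagonal_mul_diagonal, Matrix.diagonal_mul_diagonal,
      Matrix.trace_diagonal]
    exact Finset.sum_congr rfl fun i _ => by simp [pow_succ, pow_two, mul_assoc]

noncomputable def disc3 (p1 p2 p3 : ℝ) : ℝ :=
  p1^2*((p1^2-p2)/2)^2 - 4*((p1^2-p2)/2)^3 - 4*p1^3*((p1^3-3*p1*p2+2*p3)/6)
    + 18*p1*((p1^2-p2)/2)*((p1^3-3*p1*p2+2*p3)/6) - 27*((p1^3-3*p1*p2+2*p3)/6)^2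

lemma disc3_powsum (a b c : ℝ) :
    disc3 (a+b+c) (a^2+b^2+c^2) (a^3+b^3+c^3) = (a-b)^2*((b-c)^2*(a-c)^2) := by
  unfold disc3; ring

lemma disc3_witness (a d e c : ℝ) :
    disc3 (a + c*d) (a^2 + 2*c*e^2 + c^2*d^2) (a^3 + 3*c*a*e^2 + 3*c^2*d*e^2 + c^3*d^3)
      = c^2*(a*d - e^2)^2*((a - c*d)^2 + 4*c*e^2) := by
  unfold disc3; ring

def PolyFun {m : ℕ} (f : (Fin m → ℝ) → ℝ) : Prop :=
  ∃ P : MvPolynomial (Fin m) ℝ, ∀ x, eval x P = f x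

namespace PolyFun
variable {m : ℕ} {f g : (Fin m → ℝ) → ℝ}

lemma const (c : ℝ) : PolyFun (fun _ : Fin m → ℝ => c) := ⟨C c, by simp⟩
lemma coord (i : Fin m) : PolyFun (fun x => x i) := ⟨X i, by simp⟩
lemma add (hf : PolyFun f) (hg : PolyFun g) : PolyFun (fun x => f x + g x) := by
  obtain ⟨P, hP⟩ := hf; obtain ⟨Q, hQ⟩ := hg; exact ⟨P + Q, by simp [hP, hQ]⟩
lemma mul (hf : PolyFun f) (hg : PolyFun g) : PolyFun (fun x => f x * g x) := by
  obtain ⟨P, hP⟩ := hf; obtain ⟨Q, hQ⟩ := hg; exact ⟨P * Q, by simp [hP, hQ]⟩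
lemma sub (hf : PolyFun f) (hg : PolyFun g) : PolyFun (fun x => f x - g x) := by
  obtain ⟨P, hP⟩ := hf; obtain ⟨Q, hQ⟩ := hg; exact ⟨P - Q, by simp [hP, hQ]⟩
lemma sum {ι : Type*} (s : Finset ι) (F : ι → (Fin m → ℝ) → ℝ)
    (h : ∀ i ∈ s, PolyFun (F i)) : PolyFun (fun x => ∑ i ∈ s, F i x) := by
  classical
  induction s using Finset.induction_on with
  | empty => simpa using const 0
  | insert a s hnotmem ih =>
      rw [show (fun x => ∑ i ∈ insert a s, F i x) =
        (fun x => F a x + ∑ i ∈ s, F i x) from funext fun x => Finset.sum_insert hnotmem]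
      exact (h a (Finset.mem_insert_self a s)).add
        (ih fun i hi => h i (Finset.mem_insert_of_mem hi))
lemma div_const (hf : PolyFun f) (c : ℝ) : PolyFun (fun x => f x / c) := by
  simpa [div_eq_mul_inv] using hf.mul (const c⁻¹)
lemma pow (hf : PolyFun f) (n : ℕ) : PolyFun (fun x => f x ^ n) := by
  induction n with
  | zero => simpa using const 1
  | succ n ih => simpa [pow_succ] using ih.mul hf

end PolyFun

lemma N_traces (u v : Fin 3 → ℝ) (c : ℝ) :
    (vecMulVec u u + c • vecMulVec v v).trace = u ⬝ᵥ u + c * (v ⬝ᵥ v) ∧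
    ((vecMulVec u u + c • vecMulVec v v) * (vecMulVec u u + c • vecMulVec v v)).trace
      = (u ⬝ᵥ u)^2 + 2*c*(u ⬝ᵥ v)^2 + c^2*(v ⬝ᵥ v)^2 ∧
    ((vecMulVec u u + c • vecMulVec v v) * (vecMulVec u u + c • vecMulVec v v)
        * (vecMulVec u u + c • vecMulVec v v)).trace
      = (u ⬝ᵥ u)^3 + 3*c*(u ⬝ᵥ u)*(u ⬝ᵥ v)^2 + 3*c^2*(v ⬝ᵥ v)*(u ⬝ᵥ v)^2 + c^3*(v ⬝ᵥ v)^3 := by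
  refine ⟨?_, ?_, ?_⟩ <;>
  · simp only [Matrix.trace, Matrix.diag, Matrix.mul_apply, Matrix.add_apply, Matrix.smul_apply,
      Matrix.vecMulVec_apply, dotProduct, smul_eq_mul, Fin.sum_univ_three]
    ring

lemma exists_indep {m : ℕ} (b : Fin m → (Fin 3 → ℝ))
    (hspan : Submodule.span ℝ (Set.range b) = ⊤) :
    ∃ i0 j0 : Fin m, i0 ≠ j0 ∧ 0 < b i0 ⬝ᵥ b i0 ∧
      0 < (b i0 ⬝ᵥ b i0) * (b j0 ⬝ᵥ b j0) - (b i0 ⬝ᵥ b j0)^2 := by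
  have dp_nonneg : ∀ w : Fin 3 → ℝ, 0 ≤ w ⬝ᵥ w := fun w =>
    Finset.sum_nonneg fun i _ => mul_self_nonneg (w i)
  have dp_pos : ∀ w : Fin 3 → ℝ, w ≠ 0 → 0 < w ⬝ᵥ w := by
    intro w hw
    rcases (dp_nonneg w).lt_or_eq with h | h
    · exact h
    · exact absurd (dotProduct_self_eq_zero.mp h.symm) hw
  have hex : ∃ i0, b i0 ≠ 0 := by
    by_contra h
    push_neg at h
    have h2 : (⊤ : Submodule ℝ (Fin 3 → ℝ)) ≤ ⊥ := by
      rw [← hspan]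
      refine Submodule.span_le.mpr ?_
      rintro x ⟨i, rfl⟩
      simp [h i]
    exact bot_ne_top (le_antisymm bot_le h2)
  obtain ⟨i0, hu⟩ := hex
  set u := b i0 with hudef
  have hex2 : ∃ j0, b j0 ∉ Submodule.span ℝ {u} := by
    by_contra h
    push_neg at h
    have h2 : Submodule.span ℝ {u} = ⊤ := by
      refine top_unique ?_
      rw [← hspan]
      refine Submodule.span_le.mpr ?_
      rintro x ⟨i, rfl⟩
      exact h i
    have h3 := finrank_span_singleton (K := ℝ) hu
    rw [h2] at h3
    rw [finrank_top ℝ (Fin 3 → ℝ)] at h3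
    rw [Module.finrank_fin_fun] at h3
    norm_num at h3
  obtain ⟨j0, hv⟩ := hex2
  set v := b j0 with hvdef
  have hij : i0 ≠ j0 := by
    intro h
    exact hv (by rw [hvdef, ← h]; exact Submodule.mem_span_singleton_self u)
  have ha : 0 < u ⬝ᵥ u := dp_pos u hu
  set a := u ⬝ᵥ u
  set e := u ⬝ᵥ v with hedef
  set w : Fin 3 → ℝ := v - (e/a) • u with hwdef
  have hw : w ≠ 0 := by
    intro h
    apply hv
    rw [Submodule.mem_span_singleton]
    refine ⟨e/a, ?_⟩
    have : v = (e/a) • u := by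
      have := sub_eq_zero.mp h
      linear_combination (norm := module) this
    rw [this]
  have hww : 0 < w ⬝ᵥ w := dp_pos w hw
  have hexp : w ⬝ᵥ w = v ⬝ᵥ v - 2*(e/a)*e + (e/a)^2 * a := by
    rw [hwdef]
    simp only [sub_dotProduct, dotProduct_sub, smul_dotProduct, dotProduct_smul, smul_eq_mul]
    rw [dotProduct_comm v u, ← hedef]
    ring
  refine ⟨i0, j0, hij, ha, ?_⟩
  rw [hexp] at hww
  have h9 : 0 < a * (v ⬝ᵥ v - 2*(e/a)*e + (e/a)^2 * a) := mul_pos ha hww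
  have : a * (v ⬝ᵥ v - 2*(e/a)*e + (e/a)^2 * a) = a * (v ⬝ᵥ v) - e^2 := by
    field_simp
    ring
  rw [this] at h9
  exact h9

lemma disc3_polyfun {m : ℕ} (p1 p2 p3 : (Fin m → ℝ) → ℝ)
    (h1 : PolyFun p1) (h2 : PolyFun p2) (h3 : PolyFun p3) :
    PolyFun (fun k => disc3 (p1 k) (p2 k) (p3 k)) := by
  unfold disc3
  have e2 : PolyFun (fun k => (p1 k^2 - p2 k)/2) := ((h1.pow 2).sub h2).div_const 2
  have e3 : PolyFun (fun k => (p1 k^3 - 3*p1 k*p2 k + 2*p3 k)/6) :=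
    (((h1.pow 3).sub (((PolyFun.const 3).mul h1).mul h2)).add
      ((PolyFun.const 2).mul h3)).div_const 6
  exact (((((h1.pow 2).mul (e2.pow 2)).sub ((PolyFun.const 4).mul (e2.pow 3))).sub
    (((PolyFun.const 4).mul (h1.pow 3)).mul e3)).add
    ((((PolyFun.const 18).mul h1).mul e2).mul e3)).sub
    ((PolyFun.const 27).mul (e3.pow 2))

/-- For fixed spanning vectors `b j ∈ ℝ³` (`m ≥ 3`), the set of weight
vectors `k ∈ ℝᵐ` with all entries positive for which the symmetric matrix
`K(k) = ∑ j, k j • b j b jᵀ` has a repeated eigenvalue is Lebesgue-null. -/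
theorem measure_zero_repeated_eigenvalue
    (m : ℕ) (hm : 3 ≤ m) (b : Fin m → (Fin 3 → ℝ))
    (hspan : Submodule.span ℝ (Set.range b) = ⊤) :
    volume {k : Fin m → ℝ |
      (∀ j, 0 < k j) ∧
      ∃ h : (∑ j, k j • vecMulVec (b j) (b j)).IsHermitian,
        ¬ Function.Injective h.eigenvalues} = 0 := by
  classical
  set Mk : (Fin m → ℝ) → Matrix (Fin 3) (Fin 3) ℝ :=
    fun k => ∑ j, k j • vecMulVec (b j) (b j) with hMk
  set f : (Fin m → ℝ) → ℝ := fun k =>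
    disc3 (Mk k).trace ((Mk k * Mk k)).trace ((Mk k * Mk k * Mk k)).trace with hf
  -- f is a polynomial function
  have hentry : ∀ i j : Fin 3, PolyFun (fun k => Mk k i j) := by
    intro i j
    have hrw : (fun k : Fin m → ℝ => Mk k i j) = fun k => ∑ l, k l * (b l i * b l j) := by
      funext k
      simp [hMk, Matrix.sum_apply, Matrix.smul_apply, Matrix.vecMulVec_apply,
        smul_eq_mul, mul_assoc]
    rw [hrw]
    exact PolyFun.sum _ _ (fun l _ => (PolyFun.coord l).mul (PolyFun.const _))
  have hmulentry : ∀ (A B : (Fin m → ℝ) → Matrix (Fin 3) (Fin 3) ℝ),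
      (∀ i j, PolyFun (fun k => A k i j)) → (∀ i j, PolyFun (fun k => B k i j)) →
      ∀ i j, PolyFun (fun k => (A k * B k) i j) := by
    intro A B hA hB i j
    have hrw : (fun k => (A k * B k) i j) = fun k => ∑ l, A k i l * B k l j := by
      funext k; simp [Matrix.mul_apply]
    rw [hrw]
    exact PolyFun.sum _ _ fun l _ => (hA i l).mul (hB l j)
  have htr : ∀ (A : (Fin m → ℝ) → Matrix (Fin 3) (Fin 3) ℝ),
      (∀ i j, PolyFun (fun k => A k i j)) → PolyFun (fun k => (A k).trace) := by
    intro A hA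
    have hrw : (fun k => (A k).trace) = fun k => ∑ i, A k i i := by
      funext k; simp [Matrix.trace, Matrix.diag]
    rw [hrw]
    exact PolyFun.sum _ _ fun i _ => hA i i
  have hf_poly : PolyFun f :=
    disc3_polyfun _ _ _ (htr _ hentry) (htr _ (hmulentry _ _ hentry hentry))
      (htr _ (hmulentry _ _ (hmulentry _ _ hentry hentry) hentry))
  -- the bad set is contained in the zero set of f
  have hsub : {k : Fin m → ℝ |
      (∀ j, 0 < k j) ∧
      ∃ h : (∑ j, k j • vecMulVec (b j) (b j)).IsHermitian,
        ¬ Function.Injective h.eigenvalues} ⊆ {k | f k = 0} := by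
    rintro k ⟨-, h, hninj⟩
    obtain ⟨t1, t2, t3⟩ := powsum_traces (Mk k) h
    have hfk : f k = disc3 (∑ i, h.eigenvalues i) (∑ i, (h.eigenvalues i)^2)
        (∑ i, (h.eigenvalues i)^3) := by
      simp only [hf]
      rw [t1, t2, t3]
    rw [Set.mem_setOf_eq, hfk, Fin.sum_univ_three, Fin.sum_univ_three, Fin.sum_univ_three,
      disc3_powsum]
    have hcase : h.eigenvalues 0 = h.eigenvalues 1 ∨ h.eigenvalues 1 = h.eigenvalues 2 ∨
        h.eigenvalues 0 = h.eigenvalues 2 := by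
      obtain ⟨i, j, hije, hne⟩ := Function.not_injective_iff.mp hninj
      fin_cases i <;> fin_cases j <;>
        first
          | exact absurd rfl hne
          | exact Or.inl hije
          | exact Or.inl hije.symm
          | exact Or.inr (Or.inl hije)
          | exact Or.inr (Or.inl hije.symm)
          | exact Or.inr (Or.inr hije)
          | exact Or.inr (Or.inr hije.symm)
    rcases hcase with h1 | h1 | h1 <;> simp [h1, sub_self]
  -- the witness showing f is a nonzero polynomial
  obtain ⟨i0, j0, hij, ha, hD⟩ := exists_indep b hspan
  set u := b i0 with hudef
  set v := b j0 with hvdef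
  set a := u ⬝ᵥ u with hadef
  set d := v ⬝ᵥ v with hddef
  set e := u ⬝ᵥ v with hedef
  have hd : 0 < d := by nlinarith [sq_nonneg e]
  set c : ℝ := 2*a/d with hcdef
  have hc : 0 < c := by positivity
  set k0 : Fin m → ℝ := fun j => if j = i0 then 1 else if j = j0 then c else 0 with hk0
  have hM0 : Mk k0 = vecMulVec u u + c • vecMulVec v v := by
    show (∑ j, k0 j • vecMulVec (b j) (b j)) = vecMulVec u u + c • vecMulVec v v
    have hzero : ∀ x ∈ (Finset.univ : Finset (Fin m)), x ∉ ({i0, j0} : Finset (Fin m)) →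
        k0 x • vecMulVec (b x) (b x) = 0 := by
      intro x _ hx
      simp only [Finset.mem_insert, Finset.mem_singleton] at hx
      push_neg at hx
      simp [hk0, hx.1, hx.2]
    rw [← Finset.sum_subset (Finset.subset_univ ({i0, j0} : Finset (Fin m))) hzero,
      Finset.sum_pair hij]
    simp [hk0, hij.symm, hudef, hvdef]
  obtain ⟨s1, s2, s3⟩ := N_traces u v c
  have hfk0 : f k0 = c^2*(a*d - e^2)^2*((a - c*d)^2 + 4*c*e^2) := by
    simp only [hf]
    rw [hM0, s1, s2, s3, ← hadef, ← hddef, ← hedef]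
    exact disc3_witness a d e c
  have hcd : c * d = 2 * a := by
    rw [hcdef]; field_simp
  have hlast : 0 < (a - c*d)^2 + 4*c*e^2 := by
    rw [hcd]
    nlinarith [mul_nonneg hc.le (sq_nonneg e)]
  have hfk0ne : f k0 ≠ 0 := by
    rw [hfk0]
    positivity
  -- conclude
  obtain ⟨P, hP⟩ := hf_poly
  have hPne : P ≠ 0 := by
    intro h
    apply hfk0ne
    rw [← hP k0, h, map_zero]
  exact measure_mono_null hsub (by simpa [← hP] using mvpoly_null m P hPne)
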